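/- arXiv:2510.24276 — 2 statements merged into one kernel-verified Lean document; each statement's English description precedes it below -/
import Mathlib

section
/- The average-of-largest-degrees function x ↦ D(d, max{x,1}) / max{x,1} is monotonically non-increasing in x on the positive reals. -/
open Finset

/-- Sum of the `k` largest entries of `d` outside `A` (equivalently, the supremum of
`∑ w ∈ S, d w` over subsets `S` of `univ \ A` with at most `k` elements). -/
def lazySum {W : Type*} [Fintype W] [DecidableEq W] (d : W → ℕ) (A : Finset W) (k : ℕ) : ℕ :=
  ((Finset.univ \ A).powerset.filter (fun S => S.card ≤ k)).sup (fun S => ∑ w ∈ S, d w)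

/-- The piecewise linear degree sum function `D^A(d, ·)`. -/
noncomputable def degSum {W : Type*} [Fintype W] [DecidableEq W] (d : W → ℕ) (A : Finset W)
    (x : ℝ) : ℝ :=
  if x < 1 then (lazySum d A 1 : ℝ) * x
  else if ((Finset.univ \ A).card : ℝ) ≤ x then (lazySum d A (Finset.univ \ A).card : ℝ)
  else (lazySum d A ⌊x⌋₊ : ℝ)
    + ((lazySum d A (⌊x⌋₊ + 1) : ℝ) - (lazySum d A ⌊x⌋₊ : ℝ)) * (x - (⌊x⌋₊ : ℝ))

section Aux

variable {W : Type*} [Fintype W] [DecidableEq W] (d : W → ℕ) (A : Finset W)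

lemma lazySum_mono : Monotone (lazySum d A) := by
  intro m n h
  apply Finset.sup_mono
  intro S hS
  simp only [Finset.mem_filter] at hS ⊢
  exact ⟨hS.1, le_trans hS.2 h⟩

lemma lazySum_exists (k : ℕ) : ∃ S, S ⊆ Finset.univ \ A ∧ S.card ≤ k ∧
    lazySum d A k = ∑ w ∈ S, d w := by
  obtain ⟨S, hS, hEq⟩ := Finset.exists_mem_eq_sup
    (((Finset.univ \ A).powerset.filter (fun S => S.card ≤ k)))
    ⟨∅, by simp⟩ (fun S => ∑ w ∈ S, d w)
  simp only [Finset.mem_filter, Finset.mem_powerset] at hS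
  exact ⟨S, hS.1, hS.2, hEq⟩

lemma lazySum_le (k : ℕ) {S : Finset W} (hS : S ⊆ Finset.univ \ A) (hc : S.card ≤ k) :
    ∑ w ∈ S, d w ≤ lazySum d A k := by
  unfold lazySum
  exact Finset.le_sup (f := fun S => ∑ w ∈ S, d w)
    (by simp only [Finset.mem_filter, Finset.mem_powerset]; exact ⟨hS, hc⟩)

/-- concavity of the sequence `lazySum d A` -/
lemma lazySum_concave (k : ℕ) :
    lazySum d A (k + 2) + lazySum d A k ≤ 2 * lazySum d A (k + 1) := by
  obtain ⟨S, hSsub, hScard, hSeq⟩ := lazySum_exists d A (k + 2)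
  by_cases hc : S.card ≤ k + 1
  · have h1 : ∑ w ∈ S, d w ≤ lazySum d A (k + 1) := lazySum_le d A _ hSsub hc
    have h2 : lazySum d A k ≤ lazySum d A (k + 1) := lazySum_mono d A (by omega)
    omega
  · have hcard : S.card = k + 2 := by omega
    obtain ⟨T, hTsub, hTcard, hTeq⟩ := lazySum_exists d A k
    have hex : ∃ w ∈ S, w ∉ T := by
      by_contra hcon
      push_neg at hcon
      have := Finset.card_le_card hcon
      omega
    obtain ⟨w, hwS, hwT⟩ := hex
    have h1 : ∑ x ∈ S.erase w, d x ≤ lazySum d A (k + 1) := by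
      apply lazySum_le d A _ (fun x hx => hSsub (Finset.mem_of_mem_erase hx))
      rw [Finset.card_erase_of_mem hwS]; omega
    have h2 : ∑ x ∈ insert w T, d x ≤ lazySum d A (k + 1) := by
      apply lazySum_le d A _ (Finset.insert_subset (hSsub hwS) hTsub)
      calc (insert w T).card ≤ T.card + 1 := Finset.card_insert_le _ _
        _ ≤ k + 1 := by omega
    have e1 : ∑ x ∈ S.erase w, d x + d w = ∑ x ∈ S, d x := Finset.sum_erase_add _ _ hwS
    have e2 : ∑ x ∈ insert w T, d x = d w + ∑ x ∈ T, d x := Finset.sum_insert hwT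
    omega

/-- the increments are antitone -/
lemma lazySum_incr (j k : ℕ) (hjk : j ≤ k) :
    lazySum d A (k + 1) + lazySum d A j ≤ lazySum d A k + lazySum d A (j + 1) := by
  induction k, hjk using Nat.le_induction with
  | base => omega
  | succ k hjk ih =>
    have h := lazySum_concave d A k
    rw [show k + 1 + 1 = k + 2 from rfl]
    omega

/-- upper tangent line bound -/
lemma lazySum_tangent (j k : ℕ) (hjk : j ≤ k) :
    (lazySum d A k : ℤ) ≤ lazySum d A j
      + ((k : ℤ) - j) * (lazySum d A (j + 1) - lazySum d A j) := by
  induction k, hjk using Nat.le_induction with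
  | base => simp
  | succ k hjk ih =>
    have h := lazySum_incr d A j k hjk
    have h' : (lazySum d A (k + 1) : ℤ) + lazySum d A j
        ≤ lazySum d A k + lazySum d A (j + 1) := by exact_mod_cast h
    have e : ((k : ℤ) + 1 - j) * (lazySum d A (j + 1) - lazySum d A j)
        = ((k : ℤ) - j) * (lazySum d A (j + 1) - lazySum d A j)
          + (lazySum d A (j + 1) - lazySum d A j) := by ring
    push_cast
    push_cast at ih
    linarith

/-- `j * t (j+1) ≤ (j+1) * t j` -/
lemma lazySum_ratio (j : ℕ) :
    (j : ℤ) * lazySum d A (j + 1) ≤ ((j : ℤ) + 1) * lazySum d A j := by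
  induction j with
  | zero => simp
  | succ j ih =>
    have h := lazySum_concave d A j
    have h' : (lazySum d A (j + 2) : ℤ) + lazySum d A j ≤ 2 * lazySum d A (j + 1) := by
      exact_mod_cast h
    have h2 := mul_le_mul_of_nonneg_left h' (by positivity : (0:ℤ) ≤ (j : ℤ) + 1)
    push_cast
    nlinarith [ih]

end Aux

section Main

variable {W : Type*} [Fintype W] [DecidableEq W] (d : W → ℕ)

lemma degSum_key (a b : ℝ) (ha : 1 ≤ a) (hab : a ≤ b) :
    degSum d ∅ b * a ≤ degSum d ∅ a * b := by
  set A : Finset W := ∅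
  set n : ℕ := (Finset.univ \ A).card with hn
  set t : ℕ → ℕ := lazySum d A with ht
  have hb : 1 ≤ b := le_trans ha hab
  have ha1 : ¬ a < 1 := not_lt.2 ha
  have hb1 : ¬ b < 1 := not_lt.2 hb
  by_cases hna : (n : ℝ) ≤ a
  · have hnb : (n : ℝ) ≤ b := le_trans hna hab
    rw [degSum, degSum, if_neg ha1, if_neg hb1, if_pos hna, if_pos hnb]
    exact mul_le_mul_of_nonneg_left hab (Nat.cast_nonneg _)
  · push_neg at hna
    set j : ℕ := ⌊a⌋₊ with hj
    have hja : (j : ℝ) ≤ a := Nat.floor_le (by linarith)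
    have haj : a < (j : ℝ) + 1 := Nat.lt_floor_add_one a
    have hj1 : 1 ≤ j := Nat.le_floor (by exact_mod_cast ha)
    have hjn : j < n := by exact_mod_cast lt_of_le_of_lt hja hna
    have hga : degSum d ∅ a
        = (t j : ℝ) + ((t (j+1) : ℝ) - (t j : ℝ)) * (a - (j : ℝ)) := by
      rw [degSum, if_neg ha1, if_neg (not_le.2 hna)]
    have hcj : (0:ℝ) ≤ (t (j+1) : ℝ) - (t j : ℝ) := by
      have := lazySum_mono d A (Nat.le_succ j)
      simp only [← ht] at this
      have : (t j : ℝ) ≤ t (j+1) := by exact_mod_cast this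
      linarith
    -- S1 : degSum d ∅ b ≤ tangent line at j evaluated at b
    have hS1 : degSum d ∅ b ≤ (t j : ℝ) + ((t (j+1) : ℝ) - (t j : ℝ)) * (b - (j : ℝ)) := by
      by_cases hnb : (n : ℝ) ≤ b
      · rw [degSum, if_neg hb1, if_pos hnb]
        have hT := lazySum_tangent d A j n (le_of_lt hjn)
        have hT' : (t n : ℝ) ≤ (t j : ℝ) + ((n:ℝ) - j) * ((t (j+1):ℝ) - t j) := by
          exact_mod_cast hT
        have hmul : ((t (j+1):ℝ) - t j) * ((n:ℝ) - (j:ℝ))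
            ≤ ((t (j+1):ℝ) - t j) * (b - (j:ℝ)) :=
          mul_le_mul_of_nonneg_left (by linarith) hcj
        nlinarith
      · push_neg at hnb
        set k : ℕ := ⌊b⌋₊ with hk
        have hkb : (k : ℝ) ≤ b := Nat.floor_le (by linarith)
        have hjk : j ≤ k := Nat.floor_le_floor hab
        rw [degSum, if_neg hb1, if_neg (not_le.2 hnb)]
        have hT := lazySum_tangent d A j k hjk
        have hT' : (t k : ℝ) ≤ (t j : ℝ) + ((k:ℝ) - j) * ((t (j+1):ℝ) - t j) := by
          exact_mod_cast hT
        have hC := lazySum_incr d A j k hjk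
        have hC' : (t (k+1) : ℝ) - (t k : ℝ) ≤ (t (j+1) : ℝ) - (t j : ℝ) := by
          have : (t (k+1) : ℝ) + t j ≤ (t k : ℝ) + t (j+1) := by exact_mod_cast hC
          linarith
        have hmul : ((t (k+1):ℝ) - t k) * (b - (k:ℝ))
            ≤ ((t (j+1):ℝ) - t j) * (b - (k:ℝ)) :=
          mul_le_mul_of_nonneg_right hC' (by linarith)
        have hmul2 : ((t (j+1):ℝ) - t j) * ((k:ℝ) - j) + ((t (j+1):ℝ) - t j) * (b - (k:ℝ))
            = ((t (j+1):ℝ) - t j) * (b - (j:ℝ)) := by ring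
        nlinarith
    -- S2 : tangent line inequality
    have hN := lazySum_ratio d A j
    have hN' : (j : ℝ) * t (j+1) ≤ ((j:ℝ) + 1) * t j := by exact_mod_cast hN
    have hkey : (0:ℝ) ≤ (b - a) * (((j:ℝ)+1) * t j - (j:ℝ) * t (j+1)) :=
      mul_nonneg (by linarith) (by linarith)
    have hS2 : ((t j : ℝ) + ((t (j+1):ℝ) - t j) * (b - (j:ℝ))) * a
        ≤ ((t j : ℝ) + ((t (j+1):ℝ) - t j) * (a - (j:ℝ))) * b := by nlinarith
    calc degSum d ∅ b * a
        ≤ ((t j : ℝ) + ((t (j+1):ℝ) - t j) * (b - (j:ℝ))) * a :=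
          mul_le_mul_of_nonneg_right hS1 (by linarith)
      _ ≤ ((t j : ℝ) + ((t (j+1):ℝ) - t j) * (a - (j:ℝ))) * b := hS2
      _ = degSum d ∅ a * b := by rw [hga]

end Main

theorem alpha_antitone {W : Type*} [Fintype W] [DecidableEq W] (d : W → ℕ) :
    AntitoneOn (fun x : ℝ => degSum d ∅ (max x 1) / max x 1) (Set.Ioi (0 : ℝ)) := by
  intro x _ y _ hxy
  simp only
  have ha : (1:ℝ) ≤ max x 1 := le_max_right _ _
  have hb : (1:ℝ) ≤ max y 1 := le_max_right _ _
  have hab : max x 1 ≤ max y 1 := max_le_max hxy le_rfl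
  rw [div_le_div_iff₀ (by linarith) (by linarith)]
  exact degSum_key d _ _ ha hab
end

section
/- Forward 2-switching lower bound: for every simple graph G with degree sequence d containing the edge uv and avoiding all edges of M (where uv ∉ M), the number of ordered pairs (x,y) of vertices such that xy ∈ G, xy ≠ uv, {x,y} ∩ {u,v} = ∅, and neither ux nor vy lies in G ∪ M, is at least 2m(G) - D(d_u + m_u) - D(d_v + m_v), where m_w is the degree of w in M and D(k) is the sum of the k largest entries of d. -/
open Finset SimpleGraph

/-- Sum of the `k` largest entries of `d`. -/
def Dsum {V : Type*} [Fintype V] (d : V → ℕ) (k : ℕ) : ℕ :=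
  (Finset.univ.powerset.filter (fun S => S.card ≤ k)).sup (fun S => ∑ w ∈ S, d w)

/-! Of the `∑ d` ordered pairs `(x, y)` with `xy ∈ G`, those that cannot be switched with
`(u, v)` have `x ∈ {u} ∪ N(u)` or `y ∈ {v} ∪ N(v)`, neighbourhoods taken in `G ⊔ M`. At most
`∑_{x ∈ N(u)} d x ≤ D(d_u + m_u)` pairs have `x ∈ N(u)`, and at most `D(d_v + m_v)` have
`y ∈ N(v)`. The pairs with `x = u` or `y = v` cost nothing extra: reversing such a pair gives one
with `x ∈ N(u)` and `y ∈ N(v)`, so they are paid for by the overlap of the two families. -/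

theorem sum_le_Dsum {V : Type*} [Fintype V] (d : V → ℕ) {S : Finset V} {k : ℕ} (hS : #S ≤ k) :
    ∑ w ∈ S, d w ≤ Dsum d k :=
  le_sup (f := fun S => ∑ w ∈ S, d w) (mem_filter.mpr ⟨mem_powerset.mpr (subset_univ S), hS⟩)

namespace SimpleGraph

theorem ncard_neighborSet_eq_degree {V : Type*} (G : SimpleGraph V) (v : V)
    [Fintype (G.neighborSet v)] : (G.neighborSet v).ncard = G.degree v := by
  rw [Set.ncard_eq_toFinset_card', ← card_neighborFinset_eq_degree, neighborFinset]

variable {V : Type*} [Fintype V]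

section adjPairs

variable (G : SimpleGraph V) [DecidableRel G.Adj]

def adjPairs : Finset (V × V) := {p | G.Adj p.1 p.2}

variable {G} in
theorem mem_adjPairs {p : V × V} : p ∈ G.adjPairs ↔ G.Adj p.1 p.2 := by
  simp [adjPairs]

variable [DecidableEq V]

theorem card_adjPairs_filter_fst_eq (x : V) : #{p ∈ G.adjPairs | p.1 = x} = G.degree x := by
  rw [← card_neighborFinset_eq_degree, ← card_map (Function.Embedding.sectR x V)]
  congr 1
  ext ⟨a, b⟩
  simp only [mem_filter, mem_adjPairs, mem_map, mem_neighborFinset, Function.Embedding.sectR_apply,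
    Prod.mk.injEq]
  aesop

theorem card_adjPairs_filter_fst_mem (S : Finset V) :
    #{p ∈ G.adjPairs | p.1 ∈ S} = ∑ x ∈ S, G.degree x := by
  rw [card_eq_sum_card_fiberwise (f := Prod.fst) (s := {p ∈ G.adjPairs | p.1 ∈ S}) (t := S)
    fun p hp => (mem_filter.mp hp).2]
  refine sum_congr rfl fun x hx => ?_
  rw [filter_filter, ← card_adjPairs_filter_fst_eq]
  congr 1
  refine filter_congr fun p _ => ⟨And.right, ?_⟩
  rintro rfl
  exact ⟨hx, rfl⟩

theorem card_adjPairs : #G.adjPairs = ∑ x, G.degree x := by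
  rw [← card_adjPairs_filter_fst_mem, filter_true_of_mem fun p _ => mem_univ p.1]

theorem card_adjPairs_filter_snd_mem (S : Finset V) :
    #{p ∈ G.adjPairs | p.2 ∈ S} = ∑ y ∈ S, G.degree y := by
  rw [← card_adjPairs_filter_fst_mem]
  refine card_equiv (Equiv.prodComm V V) fun p => ?_
  simp [mem_adjPairs, G.adj_comm]

end adjPairs

section forwardSwitchPairs

variable [DecidableEq V] {G H : SimpleGraph V} [DecidableRel G.Adj] [DecidableRel H.Adj] {u v : V}

variable (G H u v) in
def forwardSwitchPairs : Finset (V × V) :=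
  {p ∈ G.adjPairs | p.1 ≠ u ∧ ¬H.Adj u p.1 ∧ p.2 ≠ v ∧ ¬H.Adj v p.2}

theorem of_mem_forwardSwitchPairs (hGH : G ≤ H) (huv : G.Adj u v) {p : V × V}
    (hp : p ∈ forwardSwitchPairs G H u v) :
    G.Adj p.1 p.2 ∧ s(p.1, p.2) ≠ s(u, v) ∧ p.1 ≠ u ∧ p.1 ≠ v ∧ p.2 ≠ u ∧ p.2 ≠ v
      ∧ ¬H.Adj u p.1 ∧ ¬H.Adj v p.2 := by
  obtain ⟨hxy, hxu, hux, hyv, hvy⟩ := by simpa [forwardSwitchPairs, mem_adjPairs] using hp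
  have hxv : p.1 ≠ v := fun h => hux (h ▸ hGH huv)
  have hyu : p.2 ≠ u := fun h => hvy (h ▸ hGH huv.symm)
  exact ⟨hxy, by rw [Ne, Sym2.eq_iff]; tauto, hxu, hxv, hyu, hyv, hux, hvy⟩

theorem card_adjPairs_filter_fst_eq_or_snd_eq_le (hGH : G ≤ H) (huv : G.Adj u v) :
    #{p ∈ G.adjPairs | p.1 = u ∨ p.2 = v} ≤
      #{p ∈ G.adjPairs | p.1 ∈ H.neighborFinset u ∧ p.2 ∈ H.neighborFinset v} := by
  refine card_le_card_of_injOn Prod.swap (fun p hp => ?_) Prod.swap_injective.injOn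
  obtain ⟨x, y⟩ := p
  simp only [coe_filter, mem_adjPairs, Prod.swap_prod_mk, mem_neighborFinset] at hp ⊢
  obtain ⟨hxy, rfl | rfl⟩ := hp
  · exact ⟨hxy.symm, hGH hxy, hGH huv.symm⟩
  · exact ⟨hxy.symm, hGH huv, hGH hxy.symm⟩

theorem sum_degree_le_card_forwardSwitchPairs_add (hGH : G ≤ H) (huv : G.Adj u v) :
    ∑ x, G.degree x ≤ #(forwardSwitchPairs G H u v)
      + ∑ x ∈ H.neighborFinset u, G.degree x + ∑ y ∈ H.neighborFinset v, G.degree y := by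
  set Q₁ := {p ∈ G.adjPairs | p.1 ∈ H.neighborFinset u}
  set Q₂ := {p ∈ G.adjPairs | p.2 ∈ H.neighborFinset v}
  set R := {p ∈ G.adjPairs | p.1 = u ∨ p.2 = v}
  have hcover : G.adjPairs ⊆ forwardSwitchPairs G H u v ∪ (Q₁ ∪ Q₂) ∪ R := by
    intro p hp
    simp only [forwardSwitchPairs, Q₁, Q₂, R, mem_union, mem_filter, mem_neighborFinset, hp,
      true_and]
    tauto
  have hR : #R ≤ #(Q₁ ∩ Q₂) := by
    rw [← filter_and]
    exact card_adjPairs_filter_fst_eq_or_snd_eq_le hGH huv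
  rw [← card_adjPairs]
  calc #G.adjPairs ≤ #(forwardSwitchPairs G H u v) + #(Q₁ ∪ Q₂) + #R :=
        (card_le_card hcover).trans <| (card_union_le _ _).trans <|
          Nat.add_le_add_right (card_union_le _ _) _
    _ ≤ #(forwardSwitchPairs G H u v) + (#(Q₁ ∪ Q₂) + #(Q₁ ∩ Q₂)) := by omega
    _ = #(forwardSwitchPairs G H u v) + #Q₁ + #Q₂ := by
        rw [card_union_add_card_inter, add_assoc]
    _ = _ := by rw [card_adjPairs_filter_fst_mem, card_adjPairs_filter_snd_mem]

end forwardSwitchPairs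

end SimpleGraph

theorem forward_two_switch_lower_general {V : Type*} [Fintype V] [DecidableEq V] (d : V → ℕ)
    (G M : SimpleGraph V) (u v : V)
    (hdeg : ∀ w, (G.neighborSet w).ncard = d w)
    (huv : G.Adj u v) :
    (∑ w, (d w : ℝ)) - (Dsum d (d u + (M.neighborSet u).ncard) : ℝ)
        - (Dsum d (d v + (M.neighborSet v).ncard) : ℝ)
      ≤ ({p : V × V | G.Adj p.1 p.2 ∧ s(p.1, p.2) ≠ s(u, v)
            ∧ p.1 ≠ u ∧ p.1 ≠ v ∧ p.2 ≠ u ∧ p.2 ≠ v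
            ∧ ¬ (G ⊔ M).Adj u p.1 ∧ ¬ (G ⊔ M).Adj v p.2}).ncard := by
  classical
  have hd (w : V) : G.degree w = d w := by rw [← hdeg, ncard_neighborSet_eq_degree]
  have hD (w : V) : ∑ x ∈ (G ⊔ M).neighborFinset w, G.degree x
      ≤ Dsum d (d w + (M.neighborSet w).ncard) := by
    simp only [hd]
    refine sum_le_Dsum d ?_
    rw [neighborFinset_sup, ← hd, ncard_neighborSet_eq_degree, ← card_neighborFinset_eq_degree,
      ← card_neighborFinset_eq_degree]
    exact card_union_le _ _
  have hcount : ∑ w, d w ≤ #(forwardSwitchPairs G (G ⊔ M) u v)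
      + Dsum d (d u + (M.neighborSet u).ncard) + Dsum d (d v + (M.neighborSet v).ncard) := calc
    ∑ w, d w = ∑ w, G.degree w := by simp only [hd]
    _ ≤ _ := sum_degree_le_card_forwardSwitchPairs_add le_sup_left huv
    _ ≤ _ := by gcongr <;> apply hD
  refine le_trans ?_ <| Nat.cast_le.mpr <| Set.ncard_le_ncard
    (s := ↑(forwardSwitchPairs G (G ⊔ M) u v)) fun p hp => of_mem_forwardSwitchPairs le_sup_left huv hp
  rw [Set.ncard_coe_finset]
  have := (Nat.cast_le (α := ℝ)).mpr hcount
  push_cast at this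
  linarith

theorem forward_two_switch_lower {V : Type*} [Fintype V] [DecidableEq V] (d : V → ℕ)
    (G M : SimpleGraph V) (u v : V)
    (hdeg : ∀ w, (G.neighborSet w).ncard = d w)
    (huv : G.Adj u v) (hGM : Disjoint G M) (hMuv : ¬ M.Adj u v) :
    (∑ w, (d w : ℝ)) - (Dsum d (d u + (M.neighborSet u).ncard) : ℝ)
        - (Dsum d (d v + (M.neighborSet v).ncard) : ℝ)
      ≤ ({p : V × V | G.Adj p.1 p.2 ∧ s(p.1, p.2) ≠ s(u, v)
            ∧ p.1 ≠ u ∧ p.1 ≠ v ∧ p.2 ≠ u ∧ p.2 ≠ v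
            ∧ ¬ (G ⊔ M).Adj u p.1 ∧ ¬ (G ⊔ M).Adj v p.2}).ncard :=
  forward_two_switch_lower_general d G M u v hdeg huv
end
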